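/- arXiv:1904.09015 — 5 statements merged into one kernel-verified Lean document; each statement's English description precedes it below -/
import Mathlib

section
/- Let f : ℝ^n → ℝ be continuous and μ-strongly convex with μ > 0, let A : ℝ^n → ℝ^m be a linear map with adjoint Aᵀ, and for each λ let x(λ) be the (unique) maximizer over ℝ^n of x ↦ ⟨λ, x⟩ − f(x). Then for all y₁, y₂ ∈ ℝ^m, ‖A x(Aᵀ y₁) − A x(Aᵀ y₂)‖₂ ≤ (‖A‖²/μ) ‖y₁ − y₂‖₂, where ‖A‖ is the operator norm of A (so the dual objective ψ(y) = φ(Aᵀy) has L_ψ = λ_max(AᵀA)/μ-Lipschitz gradient). -/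
open scoped RealInnerProductSpace

private lemma grad_ineq {n : ℕ} (f : EuclideanSpace ℝ (Fin n) → ℝ) (μ : ℝ) (hμ : 0 < μ)
    (hsc : ∀ x y : EuclideanSpace ℝ (Fin n), ∀ t : ℝ, t ∈ Set.Icc (0 : ℝ) 1 →
      f (t • y + (1 - t) • x) ≤ t * f y + (1 - t) * f x - μ / 2 * t * (1 - t) * ‖x - y‖ ^ 2)
    (xm : EuclideanSpace ℝ (Fin n) → EuclideanSpace ℝ (Fin n))
    (hxm : ∀ l z : EuclideanSpace ℝ (Fin n), ⟪l, z⟫ - f z ≤ ⟪l, xm l⟫ - f (xm l))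
    (l z : EuclideanSpace ℝ (Fin n)) :
    ⟪l, z - xm l⟫ ≤ f z - f (xm l) - μ / 2 * ‖xm l - z‖ ^ 2 := by
  set x₁ := xm l with hx₁
  have key : ∀ t : ℝ, 0 < t → t ≤ 1 →
      ⟪l, z - x₁⟫ ≤ f z - f x₁ - μ / 2 * (1 - t) * ‖x₁ - z‖ ^ 2 := by
    intro t ht ht1
    have h1 := hsc x₁ z t ⟨le_of_lt ht, ht1⟩
    have h2 := hxm l (t • z + (1 - t) • x₁)
    rw [← hx₁] at h2
    rw [inner_add_right, inner_smul_right, inner_smul_right] at h2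
    have h4 : t * ⟪l, z - x₁⟫ ≤ t * (f z - f x₁ - μ / 2 * (1 - t) * ‖x₁ - z‖ ^ 2) := by
      rw [inner_sub_right]; nlinarith [h1, h2]
    exact le_of_mul_le_mul_left h4 ht
  refine le_of_forall_pos_le_add fun ε hε => ?_
  set C := μ / 2 * ‖x₁ - z‖ ^ 2 with hC
  have hC0 : 0 ≤ C := by positivity
  set t : ℝ := min 1 (ε / (C + 1)) with htd
  have ht0 : 0 < t := lt_min one_pos (by positivity)
  have ht1 : t ≤ 1 := min_le_left _ _
  have := key t ht0 ht1
  have htε : C * t ≤ ε := by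
    have h5 : t ≤ ε / (C + 1) := min_le_right _ _
    have hs0 : 0 ≤ ε / (C + 1) := by positivity
    have hs : (ε / (C + 1)) * (C + 1) = ε := by field_simp
    calc C * t ≤ C * (ε / (C + 1)) := by nlinarith
    _ = ε - ε / (C + 1) := by nlinarith [hs]
    _ ≤ ε := by linarith
  nlinarith [this]

private lemma xm_lip {n : ℕ} (f : EuclideanSpace ℝ (Fin n) → ℝ) (μ : ℝ) (hμ : 0 < μ)
    (hsc : ∀ x y : EuclideanSpace ℝ (Fin n), ∀ t : ℝ, t ∈ Set.Icc (0 : ℝ) 1 →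
      f (t • y + (1 - t) • x) ≤ t * f y + (1 - t) * f x - μ / 2 * t * (1 - t) * ‖x - y‖ ^ 2)
    (xm : EuclideanSpace ℝ (Fin n) → EuclideanSpace ℝ (Fin n))
    (hxm : ∀ l z : EuclideanSpace ℝ (Fin n), ⟪l, z⟫ - f z ≤ ⟪l, xm l⟫ - f (xm l))
    (l₁ l₂ : EuclideanSpace ℝ (Fin n)) :
    μ * ‖xm l₁ - xm l₂‖ ≤ ‖l₁ - l₂‖ := by
  set x₁ := xm l₁ with hx1
  set x₂ := xm l₂ with hx2
  have h1 := grad_ineq f μ hμ hsc xm hxm l₁ x₂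
  have h2 := grad_ineq f μ hμ hsc xm hxm l₂ x₁
  simp only [← hx1, ← hx2] at h1 h2
  have hnr : ‖x₂ - x₁‖ = ‖x₁ - x₂‖ := norm_sub_rev _ _
  have hsum : μ * ‖x₁ - x₂‖ ^ 2 ≤ ⟪l₁ - l₂, x₁ - x₂⟫ := by
    rw [inner_sub_left]
    have e1 : ⟪l₂, x₁ - x₂⟫ = - ⟪l₂, x₂ - x₁⟫ := by rw [← inner_neg_right]; congr 1; abel
    have e2 : ⟪l₁, x₁ - x₂⟫ = - ⟪l₁, x₂ - x₁⟫ := by rw [← inner_neg_right]; congr 1; abel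
    rw [e1, e2]
    rw [hnr, e1] at h2
    linarith [h1, h2]
  have hcs : ⟪l₁ - l₂, x₁ - x₂⟫ ≤ ‖l₁ - l₂‖ * ‖x₁ - x₂‖ := real_inner_le_norm _ _
  rcases (norm_nonneg (x₁ - x₂)).eq_or_lt with h | h
  · rw [← h]; simp [norm_nonneg]
  · nlinarith [hsum.trans hcs, h]

theorem dual_gradient_lipschitz {n m : ℕ}
    (f : EuclideanSpace ℝ (Fin n) → ℝ) (μ : ℝ) (hμ : 0 < μ)
    (hcont : Continuous f)
    (hsc : ∀ x y : EuclideanSpace ℝ (Fin n), ∀ t : ℝ, t ∈ Set.Icc (0 : ℝ) 1 →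
      f (t • y + (1 - t) • x) ≤ t * f y + (1 - t) * f x - μ / 2 * t * (1 - t) * ‖x - y‖ ^ 2)
    (A : EuclideanSpace ℝ (Fin n) →L[ℝ] EuclideanSpace ℝ (Fin m))
    (xm : EuclideanSpace ℝ (Fin n) → EuclideanSpace ℝ (Fin n))
    (hxm : ∀ l z : EuclideanSpace ℝ (Fin n), ⟪l, z⟫ - f z ≤ ⟪l, xm l⟫ - f (xm l))
    (y₁ y₂ : EuclideanSpace ℝ (Fin m)) :
    ‖A (xm (ContinuousLinearMap.adjoint A y₁)) - A (xm (ContinuousLinearMap.adjoint A y₂))‖ ≤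
      ‖A‖ ^ 2 / μ * ‖y₁ - y₂‖ := by
  set B := ContinuousLinearMap.adjoint A with hB
  have hlip := xm_lip f μ hμ hsc xm hxm (B y₁) (B y₂)
  have h1 : ‖A (xm (B y₁)) - A (xm (B y₂))‖ ≤ ‖A‖ * ‖xm (B y₁) - xm (B y₂)‖ := by
    rw [← map_sub]; exact A.le_opNorm _
  have h2 : ‖B y₁ - B y₂‖ ≤ ‖A‖ * ‖y₁ - y₂‖ := by
    rw [← map_sub]
    calc ‖B (y₁ - y₂)‖ ≤ ‖B‖ * ‖y₁ - y₂‖ := B.le_opNorm _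
    _ = ‖A‖ * ‖y₁ - y₂‖ := by rw [hB, ContinuousLinearMap.adjoint.norm_map]
  have hxn : ‖xm (B y₁) - xm (B y₂)‖ ≤ ‖A‖ * ‖y₁ - y₂‖ / μ := by
    rw [le_div_iff₀ hμ]; nlinarith
  have hA0 : (0:ℝ) ≤ ‖A‖ := norm_nonneg _
  calc ‖A (xm (B y₁)) - A (xm (B y₂))‖ ≤ ‖A‖ * ‖xm (B y₁) - xm (B y₂)‖ := h1
    _ ≤ ‖A‖ * (‖A‖ * ‖y₁ - y₂‖ / μ) := by nlinarith
    _ = ‖A‖ ^ 2 / μ * ‖y₁ - y₂‖ := by field_simp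
end

section
/- Let f : ℝ^n → ℝ be continuous and μ-strongly convex with μ > 0, let A : ℝ^n → ℝ^m be a linear map with adjoint Aᵀ, and for each λ let x(λ) be the unique maximizer over ℝ^n of x ↦ ⟨λ, x⟩ − f(x). Then the dual function ψ(y) = sup_{x ∈ ℝ^n} {⟨y, Ax⟩ − f(x)} is differentiable at every y ∈ ℝ^m with gradient ∇ψ(y) = A x(Aᵀ y) (Demyanov–Danskin). -/
open scoped RealInnerProductSpace
open Filter Topology

set_option maxHeartbeats 1000000 in
theorem demyanov_danskin_dual_gradient {n m : ℕ}
    (f : EuclideanSpace ℝ (Fin n) → ℝ) (μ : ℝ) (hμ : 0 < μ)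
    (hcont : Continuous f)
    (hsc : ∀ x y : EuclideanSpace ℝ (Fin n), ∀ t : ℝ, t ∈ Set.Icc (0 : ℝ) 1 →
      f (t • y + (1 - t) • x) ≤ t * f y + (1 - t) * f x - μ / 2 * t * (1 - t) * ‖x - y‖ ^ 2)
    (A : EuclideanSpace ℝ (Fin n) →L[ℝ] EuclideanSpace ℝ (Fin m))
    (xm : EuclideanSpace ℝ (Fin n) → EuclideanSpace ℝ (Fin n))
    (hxm : ∀ l z : EuclideanSpace ℝ (Fin n), ⟪l, z⟫ - f z ≤ ⟪l, xm l⟫ - f (xm l))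
    (y : EuclideanSpace ℝ (Fin m)) :
    HasGradientAt (fun y' : EuclideanSpace ℝ (Fin m) => ⨆ x : EuclideanSpace ℝ (Fin n), (⟪y', A x⟫ - f x))
      (A (xm (ContinuousLinearMap.adjoint A y))) y := by
  set At := ContinuousLinearMap.adjoint A with hAt
  -- Quadratic growth at the maximizer
  have key : ∀ l z : EuclideanSpace ℝ (Fin n),
      ⟪l, z⟫ - f z + μ / 2 * ‖z - xm l‖ ^ 2 ≤ ⟪l, xm l⟫ - f (xm l) := by
    intro l z
    have H : ∀ t : ℝ, t ∈ Set.Ioc (0 : ℝ) 1 →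
        ⟪l, z⟫ - f z + μ / 2 * (1 - t) * ‖z - xm l‖ ^ 2 ≤ ⟪l, xm l⟫ - f (xm l) := by
      intro t ht
      have h1 := hsc (xm l) z t ⟨le_of_lt ht.1, ht.2⟩
      have h2 := hxm l (t • z + (1 - t) • xm l)
      have h3 : ⟪l, t • z + (1 - t) • xm l⟫ = t * ⟪l, z⟫ + (1 - t) * ⟪l, xm l⟫ := by
        rw [inner_add_right, real_inner_smul_right, real_inner_smul_right]
      rw [h3] at h2
      have hnorm : ‖xm l - z‖ = ‖z - xm l‖ := norm_sub_rev _ _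
      rw [hnorm] at h1
      have h4 : t * (⟪l, z⟫ - f z + μ / 2 * (1 - t) * ‖z - xm l‖ ^ 2) ≤
          t * (⟪l, xm l⟫ - f (xm l)) := by nlinarith [h1, h2]
      exact le_of_mul_le_mul_left h4 ht.1
    have hmem : Set.Ioc (0 : ℝ) 1 ∈ 𝓝[>] (0 : ℝ) := by
      rw [← Set.Ioi_inter_Iic]
      exact Filter.inter_mem self_mem_nhdsWithin (nhdsWithin_le_nhds (Iic_mem_nhds one_pos))
    have tends : Filter.Tendsto
        (fun t : ℝ => ⟪l, z⟫ - f z + μ / 2 * (1 - t) * ‖z - xm l‖ ^ 2)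
        (𝓝[>] (0 : ℝ))
        (𝓝 (⟪l, z⟫ - f z + μ / 2 * (1 - 0) * ‖z - xm l‖ ^ 2)) := by
      apply Filter.Tendsto.mono_left _ nhdsWithin_le_nhds
      exact (Continuous.tendsto (by continuity) 0)
    have := le_of_tendsto tends (Filter.eventually_iff_exists_mem.2 ⟨_, hmem, H⟩)
    simpa using this
  -- Lipschitz property of the maximizer
  have lip : ∀ l l' : EuclideanSpace ℝ (Fin n), ‖xm l - xm l'‖ ≤ ‖l - l'‖ / μ := by
    intro l l'
    have h1 := key l (xm l')
    have h2 := key l' (xm l)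
    have hd : ‖xm l' - xm l‖ = ‖xm l - xm l'‖ := norm_sub_rev _ _
    rw [hd] at h1
    have hsum : μ * ‖xm l - xm l'‖ ^ 2 ≤ ⟪l - l', xm l - xm l'⟫ := by
      rw [inner_sub_left, inner_sub_right, inner_sub_right]
      nlinarith [h1, h2]
    have hc : ⟪l - l', xm l - xm l'⟫ ≤ ‖l - l'‖ * ‖xm l - xm l'‖ := real_inner_le_norm _ _
    rw [le_div_iff₀ hμ]
    nlinarith [hsum, hc, norm_nonneg (xm l - xm l'), norm_nonneg (l - l')]
  -- Value of the supremum
  have psi_eq : ∀ y' : EuclideanSpace ℝ (Fin m),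
      (⨆ x : EuclideanSpace ℝ (Fin n), (⟪y', A x⟫ - f x)) =
        ⟪y', A (xm (At y'))⟫ - f (xm (At y')) := by
    intro y'
    have hb : ∀ x, ⟪y', A x⟫ - f x ≤ ⟪y', A (xm (At y'))⟫ - f (xm (At y')) := by
      intro x
      have := hxm (At y') x
      rwa [hAt, ContinuousLinearMap.adjoint_inner_left,
        ContinuousLinearMap.adjoint_inner_left] at this
    refine le_antisymm (ciSup_le hb) ?_
    exact le_ciSup ⟨_, fun z hz => by obtain ⟨x, rfl⟩ := hz; exact hb x⟩ (xm (At y'))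
  -- Differentiability
  rw [hasGradientAt_iff_isLittleO]
  set g := A (xm (At y)) with hg
  set C := ‖At‖ ^ 2 / μ with hC
  have hC0 : 0 ≤ C := by positivity
  have hbound : ∀ y' : EuclideanSpace ℝ (Fin m),
      ‖(⨆ x : EuclideanSpace ℝ (Fin n), (⟪y', A x⟫ - f x)) -
        (⨆ x : EuclideanSpace ℝ (Fin n), (⟪y, A x⟫ - f x)) - ⟪g, y' - y⟫‖
        ≤ C * ‖y' - y‖ ^ 2 := by
    intro y'
    rw [psi_eq y', psi_eq y]
    set x₀ := xm (At y) with hx0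
    set x₁ := xm (At y') with hx1
    have hgy : ⟪g, y' - y⟫ = ⟪At (y' - y), x₀⟫ := by
      rw [hAt, ContinuousLinearMap.adjoint_inner_left, real_inner_comm]
    have e1 : (⟪y', A x₁⟫ : ℝ) = ⟪At y', x₁⟫ := by
      rw [hAt, ContinuousLinearMap.adjoint_inner_left]
    have e2 : (⟪y, A x₀⟫ : ℝ) = ⟪At y, x₀⟫ := by
      rw [hAt, ContinuousLinearMap.adjoint_inner_left]
    rw [hgy, e1, e2]
    have hsplit : ⟪At (y' - y), x₀⟫ = ⟪At y', x₀⟫ - ⟪At y, x₀⟫ := by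
      rw [map_sub, inner_sub_left]
    have hsplit1 : ⟪At (y' - y), x₁⟫ = ⟪At y', x₁⟫ - ⟪At y, x₁⟫ := by
      rw [map_sub, inner_sub_left]
    -- lower bound: error ≥ 0
    have hlow : ⟪At y', x₀⟫ - f x₀ ≤ ⟪At y', x₁⟫ - f x₁ := hxm (At y') x₀
    -- upper bound
    have hup : ⟪At y, x₁⟫ - f x₁ ≤ ⟪At y, x₀⟫ - f x₀ := hxm (At y) x₁
    have herr : (⟪At y', x₁⟫ - f x₁) - (⟪At y, x₀⟫ - f x₀) - ⟪At (y' - y), x₀⟫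
        ≤ ⟪At (y' - y), x₁ - x₀⟫ := by
      have : ⟪At (y' - y), x₁ - x₀⟫ = ⟪At (y' - y), x₁⟫ - ⟪At (y' - y), x₀⟫ := by
        rw [inner_sub_right]
      rw [this, hsplit1]
      linarith
    have hcs : ⟪At (y' - y), x₁ - x₀⟫ ≤ ‖At (y' - y)‖ * ‖x₁ - x₀‖ := real_inner_le_norm _ _
    have hA1 : ‖At (y' - y)‖ ≤ ‖At‖ * ‖y' - y‖ := At.le_opNorm _
    have hlip : ‖x₁ - x₀‖ ≤ ‖At y' - At y‖ / μ := lip (At y') (At y)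
    have hAd : ‖At y' - At y‖ = ‖At (y' - y)‖ := by rw [map_sub]
    rw [hAd] at hlip
    have hbig : ⟪At (y' - y), x₁ - x₀⟫ ≤ C * ‖y' - y‖ ^ 2 := by
      have h5 : ‖At (y' - y)‖ * ‖x₁ - x₀‖ ≤ ‖At (y' - y)‖ * (‖At (y' - y)‖ / μ) :=
        mul_le_mul_of_nonneg_left hlip (norm_nonneg _)
      have h6 : ‖At (y' - y)‖ * (‖At (y' - y)‖ / μ) ≤ (‖At‖ * ‖y' - y‖) * ((‖At‖ * ‖y' - y‖) / μ) := by
        have h7 : ‖At (y' - y)‖ / μ ≤ (‖At‖ * ‖y' - y‖) / μ := by gcongr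
        exact mul_le_mul hA1 h7 (by positivity) (by positivity)
      have h8 : (‖At‖ * ‖y' - y‖) * ((‖At‖ * ‖y' - y‖) / μ) = C * ‖y' - y‖ ^ 2 := by
        rw [hC]; ring
      linarith
    rw [Real.norm_eq_abs, abs_le]
    constructor
    · have : (0 : ℝ) ≤ (⟪At y', x₁⟫ - f x₁) - (⟪At y, x₀⟫ - f x₀) - ⟪At (y' - y), x₀⟫ := by
        rw [hsplit]; linarith
      have hnn : (0 : ℝ) ≤ C * ‖y' - y‖ ^ 2 := by positivity
      linarith
    · linarith
  rw [Asymptotics.isLittleO_iff]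
  intro ε hε
  have hδ : 0 < ε / (C + 1) := by positivity
  have hball : ∀ᶠ y' in nhds y, ‖y' - y‖ < ε / (C + 1) := by
    filter_upwards [Metric.ball_mem_nhds y hδ] with y' hy'
    rwa [Metric.mem_ball, dist_eq_norm] at hy'
  filter_upwards [hball] with y' hy'
  have h1 := hbound y'
  have hd0 : 0 ≤ ‖y' - y‖ := norm_nonneg _
  have h3 : ‖y' - y‖ * (C + 1) ≤ ε := ((lt_div_iff₀ (by positivity)).1 hy').le
  nlinarith [h1, hd0, hC0, mul_le_mul_of_nonneg_left h3 hd0]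
end

section
/- Penalty method guarantee: let f : ℝ^n → ℝ, let A : ℝ^n → ℝ^m be linear, let x* satisfy A x* = 0 and f(x*) ≤ f(x) for all x with A x = 0, and suppose there exists y* ∈ ℝ^m with ‖y*‖₂ ≤ R_y (R_y > 0) such that f(x) + ⟨y*, A x⟩ ≥ f(x*) for all x ∈ ℝ^n. Let ε > 0 and define F(x) = f(x) + (R_y²/ε) ‖A x‖₂². If a point x^N satisfies F(x^N) ≤ F(z) + ε for all z ∈ ℝ^n, then f(x^N) − f(x*) ≤ ε and ‖A x^N‖₂ ≤ 2ε/R_y. -/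
open scoped RealInnerProductSpace

theorem penalty_method_guarantee {n m : ℕ}
    (f : EuclideanSpace ℝ (Fin n) → ℝ)
    (A : EuclideanSpace ℝ (Fin n) →L[ℝ] EuclideanSpace ℝ (Fin m))
    (xs : EuclideanSpace ℝ (Fin n)) (hxs : A xs = 0)
    (hmin : ∀ x : EuclideanSpace ℝ (Fin n), A x = 0 → f xs ≤ f x)
    (Ry ε : ℝ) (hRy : 0 < Ry) (hε : 0 < ε)
    (ys : EuclideanSpace ℝ (Fin m)) (hys : ‖ys‖ ≤ Ry)
    (hdual : ∀ x : EuclideanSpace ℝ (Fin n), f xs ≤ f x + ⟪ys, A x⟫)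
    (xN : EuclideanSpace ℝ (Fin n))
    (hxN : ∀ z : EuclideanSpace ℝ (Fin n),
      f xN + Ry ^ 2 / ε * ‖A xN‖ ^ 2 ≤ f z + Ry ^ 2 / ε * ‖A z‖ ^ 2 + ε) :
    f xN - f xs ≤ ε ∧ ‖A xN‖ ≤ 2 * ε / Ry := by
  set t := ‖A xN‖ with ht
  have htnn : 0 ≤ t := norm_nonneg _
  have h1 : f xN + Ry ^ 2 / ε * t ^ 2 ≤ f xs + ε := by
    have := hxN xs
    rw [hxs] at this
    simpa using this
  have hc : ⟪ys, A xN⟫ ≤ Ry * t := by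
    calc ⟪ys, A xN⟫ ≤ ‖ys‖ * ‖A xN‖ := real_inner_le_norm _ _
    _ ≤ Ry * t := by
        apply mul_le_mul_of_nonneg_right hys (norm_nonneg _)
  have h2 : f xs ≤ f xN + Ry * t := le_trans (hdual xN) (by linarith)
  have hpos : 0 ≤ Ry ^ 2 / ε * t ^ 2 := by positivity
  refine ⟨by linarith, ?_⟩
  by_contra hcon
  push_neg at hcon
  have h3 : Ry * t > 2 * ε := by
    have := (div_lt_iff₀ hRy).mp hcon
    nlinarith
  have h4 : Ry ^ 2 / ε * t ^ 2 = (Ry * t) * (Ry * t) / ε := by ring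
  have h5 : (Ry * t) * (Ry * t) / ε ≤ ε + Ry * t := by linarith [h4 ▸ h1]
  have h6 : (Ry * t) * (Ry * t) ≤ (ε + Ry * t) * ε := (div_le_iff₀ hε).mp h5
  nlinarith [h3, h6, hε]
end

section
/- Let f : ℝ^n → ℝ be convex and differentiable with L-Lipschitz gradient (L > 0), let x ∈ ℝ^n, and let g ∈ ℝ^n satisfy ‖g − ∇f(x)‖₂ ≤ δ. Then for every y ∈ ℝ^n: f(x) + ⟨g, y − x⟩ − δ‖y − x‖₂ ≤ f(y) ≤ f(x) + ⟨g, y − x⟩ + L‖y − x‖₂² + δ²/(2L). -/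
open scoped RealInnerProductSpace

theorem inexact_gradient_model {n : ℕ}
    (f : EuclideanSpace ℝ (Fin n) → ℝ) (L δ : ℝ) (hL : 0 < L)
    (hconv : ConvexOn ℝ Set.univ f)
    (f' : EuclideanSpace ℝ (Fin n) → EuclideanSpace ℝ (Fin n))
    (hgrad : ∀ z : EuclideanSpace ℝ (Fin n), HasGradientAt f (f' z) z)
    (hlip : ∀ z w : EuclideanSpace ℝ (Fin n), ‖f' w - f' z‖ ≤ L * ‖w - z‖)
    (x g : EuclideanSpace ℝ (Fin n)) (hg : ‖g - f' x‖ ≤ δ) :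
    ∀ y : EuclideanSpace ℝ (Fin n),
      f x + ⟪g, y - x⟫ - δ * ‖y - x‖ ≤ f y ∧
      f y ≤ f x + ⟪g, y - x⟫ + L * ‖y - x‖ ^ 2 + δ ^ 2 / (2 * L) := by
  intro y
  set v : EuclideanSpace ℝ (Fin n) := y - x with hv
  set c : ℝ → EuclideanSpace ℝ (Fin n) := fun t => x + t • v with hc
  have hc0 : c 0 = x := by simp [hc]
  have hc1 : c 1 = y := by simp [hc, hv]
  have hcd : ∀ t : ℝ, HasDerivAt c v t := by
    intro t
    simpa [hc] using ((hasDerivAt_id t).smul_const v).const_add x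
  -- φ(t) = f(x + t v) has derivative ⟪f'(c t), v⟫
  have hφd : ∀ t : ℝ, HasDerivAt (fun s => f (c s)) ⟪f' (c t), v⟫ t := by
    intro t
    have h1 := ((hgrad (c t)).hasFDerivAt.comp_hasDerivAt t (hcd t))
    simp at h1
    exact h1
  -- inner product bounds from hg
  have hδ0 : 0 ≤ δ := le_trans (norm_nonneg _) hg
  have hineq : |⟪f' x - g, v⟫| ≤ δ * ‖v‖ := by
    calc |⟪f' x - g, v⟫| ≤ ‖f' x - g‖ * ‖v‖ := abs_real_inner_le_norm _ _
    _ ≤ δ * ‖v‖ := by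
        apply mul_le_mul_of_nonneg_right _ (norm_nonneg _)
        rwa [← norm_neg, neg_sub]
  have hdecomp : ⟪f' x, v⟫ = ⟪g, v⟫ + ⟪f' x - g, v⟫ := by
    rw [inner_sub_left]; ring
  constructor
  · -- lower bound via convexity
    have hφc : ConvexOn ℝ Set.univ fun s => f (c s) := by
      have haff : ConvexOn ℝ ((AffineMap.lineMap x y : ℝ →ᵃ[ℝ] _) ⁻¹' Set.univ)
          (f ∘ (AffineMap.lineMap x y : ℝ →ᵃ[ℝ] _)) :=
        hconv.comp_affineMap _
      have : ∀ s : ℝ, f (c s) = (f ∘ (AffineMap.lineMap x y : ℝ →ᵃ[ℝ] _)) s := by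
        intro s
        simp [hc, hv, AffineMap.lineMap_apply, Function.comp]
        congr 1
        module
      simpa [Set.preimage_univ, funext this] using haff
    have hs := hφc.le_slope_of_hasDerivAt (Set.mem_univ (0:ℝ)) (Set.mem_univ (1:ℝ))
      one_pos (hφd 0)
    rw [slope_def_field] at hs
    have hs' : ⟪f' x, v⟫ ≤ f y - f x := by
      simpa [hc0, hc1] using hs
    have : ⟪g, v⟫ - δ * ‖v‖ ≤ ⟪f' x, v⟫ := by
      have := (abs_le.mp hineq).1
      rw [hdecomp]; linarith
    linarith
  · -- upper bound via descent lemma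
    set h : ℝ → ℝ := fun t => f (c t) - t * ⟪f' x, v⟫ - L / 2 * t ^ 2 * ‖v‖ ^ 2 with hh
    have hhd : ∀ t : ℝ,
        HasDerivAt h (⟪f' (c t), v⟫ - ⟪f' x, v⟫ - L * t * ‖v‖ ^ 2) t := by
      intro t
      have h2 : HasDerivAt (fun t : ℝ => t * ⟪f' x, v⟫) ⟪f' x, v⟫ t := by
        simpa using (hasDerivAt_id t).mul_const ⟪f' x, v⟫
      have h3 : HasDerivAt (fun t : ℝ => L / 2 * t ^ 2 * ‖v‖ ^ 2)
          (L * t * ‖v‖ ^ 2) t := by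
        have := ((hasDerivAt_pow 2 t).const_mul (L / 2)).mul_const (‖v‖ ^ 2)
        exact this.congr_deriv (by push_cast; ring)
      exact ((hφd t).sub h2).sub h3
    have hanti : AntitoneOn h (Set.Icc 0 1) := by
      apply antitoneOn_of_hasDerivWithinAt_nonpos (convex_Icc 0 1)
        (fun t _ => ((hhd t).continuousAt).continuousWithinAt)
        (fun t _ => ((hhd t).hasDerivWithinAt))
      intro t ht
      rw [interior_Icc] at ht
      have hlip' : ‖f' (c t) - f' x‖ ≤ L * (t * ‖v‖) := by
        have := hlip x (c t)
        have : ‖f' (c t) - f' x‖ ≤ L * ‖c t - x‖ := this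
        calc ‖f' (c t) - f' x‖ ≤ L * ‖c t - x‖ := this
        _ = L * (t * ‖v‖) := by
            rw [show c t - x = t • v by simp [hc], norm_smul]
            simp [abs_of_pos ht.1]
      have hinner : ⟪f' (c t) - f' x, v⟫ ≤ L * t * ‖v‖ ^ 2 := by
        calc ⟪f' (c t) - f' x, v⟫ ≤ ‖f' (c t) - f' x‖ * ‖v‖ := real_inner_le_norm _ _
        _ ≤ L * (t * ‖v‖) * ‖v‖ :=
            mul_le_mul_of_nonneg_right hlip' (norm_nonneg _)
        _ = L * t * ‖v‖ ^ 2 := by ring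
      rw [inner_sub_left] at hinner
      linarith
    have hkey := hanti (Set.mem_Icc.mpr ⟨le_refl 0, zero_le_one⟩)
      (Set.mem_Icc.mpr ⟨zero_le_one, le_refl 1⟩) zero_le_one
    simp only [hh, hc0, hc1] at hkey
    -- hkey : f y - ⟪f' x, v⟫ - L/2 ‖v‖² ≤ f x
    have hkey' : f y ≤ f x + ⟪f' x, v⟫ + L / 2 * ‖v‖ ^ 2 := by
      have : f y - 1 * ⟪f' x, v⟫ - L / 2 * 1 ^ 2 * ‖v‖ ^ 2 ≤
          f x - 0 * ⟪f' x, v⟫ - L / 2 * 0 ^ 2 * ‖v‖ ^ 2 := hkey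
      linarith
    -- Young: δ‖v‖ ≤ δ²/(2L) + L/2 ‖v‖²
    have hyoung : δ * ‖v‖ ≤ δ ^ 2 / (2 * L) + L / 2 * ‖v‖ ^ 2 := by
      have hkey2 : 2 * L * (δ * ‖v‖) ≤ δ ^ 2 + L ^ 2 * ‖v‖ ^ 2 := by
        nlinarith [sq_nonneg (δ - L * ‖v‖)]
      have heq : δ ^ 2 / (2 * L) + L / 2 * ‖v‖ ^ 2 =
          (δ ^ 2 + L ^ 2 * ‖v‖ ^ 2) / (2 * L) := by
        field_simp
      rw [heq, le_div_iff₀ (by positivity)]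
      linarith
    have hsub : ⟪f' x - g, v⟫ ≤ δ * ‖v‖ := (abs_le.mp hineq).2
    rw [hdecomp] at hkey'
    linarith
end

section
/- Strong convexity of the dual on (ker Aᵀ)^⊥: let f : ℝ^n → ℝ be continuous, μ-strongly convex (μ > 0), and differentiable with L-Lipschitz gradient (L > 0); let A : ℝ^n → ℝ^m be linear with adjoint Aᵀ; let ψ(y) = sup_{x ∈ ℝ^n} {⟨y, Ax⟩ − f(x)} and let x(λ) be the unique maximizer of x ↦ ⟨λ, x⟩ − f(x). Suppose λ > 0 satisfies λ‖u‖₂² ≤ ‖Aᵀ u‖₂² for all u in the orthogonal complement of ker(Aᵀ). Then for all y₁, y₂ ∈ ℝ^m with y₂ − y₁ ∈ (ker Aᵀ)^⊥: ψ(y₂) ≥ ψ(y₁) + ⟨A x(Aᵀ y₁), y₂ − y₁⟩ + (λ/(2L)) ‖y₂ − y₁‖₂². -/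
open scoped RealInnerProductSpace
open InnerProductSpace

lemma descent_lemma' {E : Type*} [NormedAddCommGroup E] [InnerProductSpace ℝ E]
    [CompleteSpace E]
    (f : E → ℝ) (f' : E → E) (L : ℝ)
    (hgrad : ∀ z, HasGradientAt f (f' z) z)
    (hlip : ∀ z w, ‖f' w - f' z‖ ≤ L * ‖w - z‖)
    (z w : E) : f w ≤ f z + ⟪f' z, w - z⟫ + L / 2 * ‖w - z‖ ^ 2 := by
  set d := w - z with hd
  set g : ℝ → ℝ := fun t => f (z + t • d) - t * ⟪f' z, d⟫ - L / 2 * t ^ 2 * ‖d‖ ^ 2 with hg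
  have hcurve : ∀ t : ℝ, HasDerivAt (fun t : ℝ => z + t • d) d t := by
    intro t
    simpa using ((hasDerivAt_id t).smul_const d).const_add z
  have hderiv : ∀ t : ℝ, HasDerivAt g
      (⟪f' (z + t • d), d⟫ - ⟪f' z, d⟫ - L * t * ‖d‖ ^ 2) t := by
    intro t
    have h1 : HasDerivAt (fun t : ℝ => f (z + t • d)) (⟪f' (z + t • d), d⟫) t := by
      have := ((hgrad (z + t • d)).hasFDerivAt).comp_hasDerivAt t (hcurve t)
      simpa [InnerProductSpace.toDual_apply_apply, Function.comp_def] using this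
    have h2 : HasDerivAt (fun t : ℝ => t * ⟪f' z, d⟫) (⟪f' z, d⟫) t := by
      simpa using (hasDerivAt_id t).mul_const (⟪f' z, d⟫)
    have h3 : HasDerivAt (fun t : ℝ => L / 2 * t ^ 2 * ‖d‖ ^ 2) (L * t * ‖d‖ ^ 2) t := by
      have := ((hasDerivAt_pow 2 t).const_mul (L / 2)).mul_const (‖d‖ ^ 2)
      refine this.congr_deriv ?_
      ring
    exact (h1.sub h2).sub h3
  have hmono : g 1 ≤ g 0 := by
    have : AntitoneOn g (Set.Icc 0 1) := by
      apply antitoneOn_of_deriv_nonpos (convex_Icc 0 1)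
      · exact Continuous.continuousOn
          (continuous_iff_continuousAt.mpr fun t => (hderiv t).continuousAt)
      · intro t ht
        exact (hderiv t).differentiableAt.differentiableWithinAt
      · intro t ht
        rw [(hderiv t).deriv]
        have ht' : 0 < t := (Set.mem_Ioo.mp (by simpa using ht)).1
        have h1 : ⟪f' (z + t • d) - f' z, d⟫ ≤ L * t * ‖d‖ ^ 2 := by
          calc ⟪f' (z + t • d) - f' z, d⟫ ≤ ‖f' (z + t • d) - f' z‖ * ‖d‖ :=
                real_inner_le_norm _ _
            _ ≤ (L * ‖(z + t • d) - z‖) * ‖d‖ := by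
                gcongr; exact hlip z (z + t • d)
            _ = L * t * ‖d‖ ^ 2 := by
                simp [norm_smul, abs_of_pos ht']; ring
        have := inner_sub_left (𝕜 := ℝ) (f' (z + t • d)) (f' z) d
        linarith [h1, this]
    exact this (Set.left_mem_Icc.mpr zero_le_one) (Set.right_mem_Icc.mpr zero_le_one) zero_le_one
  have h0 : g 0 = f z := by simp [hg]
  have h1 : g 1 = f w - ⟪f' z, d⟫ - L / 2 * ‖d‖ ^ 2 := by simp [hg, hd]
  rw [h0, h1] at hmono
  linarith

lemma grad_at_max {E : Type*} [NormedAddCommGroup E] [InnerProductSpace ℝ E]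
    [CompleteSpace E]
    (f : E → ℝ) (f' : E → E) (hgrad : ∀ z, HasGradientAt f (f' z) z)
    (l x₁ : E) (hmax : ∀ z, ⟪l, z⟫ - f z ≤ ⟪l, x₁⟫ - f x₁) :
    f' x₁ = l := by
  have hdg : HasFDerivAt (fun x : E => ⟪l, x⟫ - f x)
      (innerSL ℝ l - toDual ℝ E (f' x₁)) x₁ :=
    (innerSL ℝ l).hasFDerivAt.sub (hgrad x₁).hasFDerivAt
  have hzero : innerSL ℝ l - toDual ℝ E (f' x₁) = 0 := by
    have : IsLocalMax (fun x : E => ⟪l, x⟫ - f x) x₁ :=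
      Filter.Eventually.of_forall hmax
    exact this.hasFDerivAt_eq_zero hdg
  apply ext_inner_right ℝ
  intro v
  have := congrArg (fun T => T v) hzero
  simp only [ContinuousLinearMap.sub_apply, ContinuousLinearMap.zero_apply,
    innerSL_apply_apply, InnerProductSpace.toDual_apply_apply, sub_eq_zero] at this
  exact this.symm

theorem dual_strong_convexity_on_orthogonal_complement {n m : ℕ}
    (f : EuclideanSpace ℝ (Fin n) → ℝ) (μ L : ℝ) (hμ : 0 < μ) (hL : 0 < L)
    (hcont : Continuous f)
    (hsc : ∀ x y : EuclideanSpace ℝ (Fin n), ∀ t : ℝ, t ∈ Set.Icc (0 : ℝ) 1 →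
      f (t • y + (1 - t) • x) ≤ t * f y + (1 - t) * f x - μ / 2 * t * (1 - t) * ‖x - y‖ ^ 2)
    (f' : EuclideanSpace ℝ (Fin n) → EuclideanSpace ℝ (Fin n))
    (hgrad : ∀ z : EuclideanSpace ℝ (Fin n), HasGradientAt f (f' z) z)
    (hlip : ∀ z w : EuclideanSpace ℝ (Fin n), ‖f' w - f' z‖ ≤ L * ‖w - z‖)
    (A : EuclideanSpace ℝ (Fin n) →L[ℝ] EuclideanSpace ℝ (Fin m))
    (ψ : EuclideanSpace ℝ (Fin m) → ℝ)
    (hψ : ∀ y : EuclideanSpace ℝ (Fin m),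
      IsGreatest (Set.range fun x : EuclideanSpace ℝ (Fin n) => ⟪y, A x⟫ - f x) (ψ y))
    (xm : EuclideanSpace ℝ (Fin n) → EuclideanSpace ℝ (Fin n))
    (hxm : ∀ l z : EuclideanSpace ℝ (Fin n), ⟪l, z⟫ - f z ≤ ⟪l, xm l⟫ - f (xm l))
    (lam : ℝ) (hlam : 0 < lam)
    (hmin : ∀ u ∈ (LinearMap.ker ((ContinuousLinearMap.adjoint A :
        EuclideanSpace ℝ (Fin m) →ₗ[ℝ] EuclideanSpace ℝ (Fin n))))ᗮ,
      lam * ‖u‖ ^ 2 ≤ ‖ContinuousLinearMap.adjoint A u‖ ^ 2) :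
    ∀ y₁ y₂ : EuclideanSpace ℝ (Fin m),
      y₂ - y₁ ∈ (LinearMap.ker ((ContinuousLinearMap.adjoint A :
        EuclideanSpace ℝ (Fin m) →ₗ[ℝ] EuclideanSpace ℝ (Fin n))))ᗮ →
      ψ y₁ + ⟪A (xm (ContinuousLinearMap.adjoint A y₁)), y₂ - y₁⟫ +
        lam / (2 * L) * ‖y₂ - y₁‖ ^ 2 ≤ ψ y₂ := by
  intro y₁ y₂ hmem
  set At := ContinuousLinearMap.adjoint A with hAt
  set l₁ := At y₁ with hl₁
  set x₁ := xm l₁ with hx₁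
  set d := At (y₂ - y₁) with hdd
  set w := x₁ + L⁻¹ • d with hw
  -- gradient of f at x₁ is l₁
  have hg1 : f' x₁ = l₁ := grad_at_max f f' hgrad l₁ x₁ (fun z => hxm l₁ z)
  -- descent bound
  have hdesc : f w ≤ f x₁ + ⟪l₁, w - x₁⟫ + L / 2 * ‖w - x₁‖ ^ 2 := by
    have := descent_lemma' f f' L hgrad hlip x₁ w
    rwa [hg1] at this
  have hwx : w - x₁ = L⁻¹ • d := by simp [hw]
  -- adjoint identities
  have hadj : ∀ (y : EuclideanSpace ℝ (Fin m)) (x : EuclideanSpace ℝ (Fin n)),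
      ⟪y, A x⟫ = ⟪At y, x⟫ := by
    intro y x
    rw [hAt, ContinuousLinearMap.adjoint_inner_left]
  -- ψ y₂ lower bound via w
  have hψ2 : ⟪y₂, A w⟫ - f w ≤ ψ y₂ := (hψ y₂).2 ⟨w, rfl⟩
  -- ψ y₁ upper bound
  have hψ1 : ψ y₁ ≤ ⟪l₁, x₁⟫ - f x₁ := by
    obtain ⟨x₀, hx₀⟩ := (hψ y₁).1
    rw [← hx₀]
    calc (⟪y₁, A x₀⟫ - f x₀ : ℝ) = ⟪l₁, x₀⟫ - f x₀ := by rw [hadj]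
      _ ≤ ⟪l₁, x₁⟫ - f x₁ := hxm l₁ x₀
  have hAty₂ : At y₂ = l₁ + d := by
    rw [hl₁, hdd, map_sub]; abel
  have hy2w : ⟪y₂, A w⟫ = ⟪l₁, x₁⟫ + ⟪d, x₁⟫ + L⁻¹ * ⟪l₁, d⟫ + L⁻¹ * ‖d‖ ^ 2 := by
    rw [hadj, hAty₂, hw]
    simp only [inner_add_left, inner_add_right, inner_smul_right,
      real_inner_self_eq_norm_sq]
    ring
  have hlw : ⟪l₁, w - x₁⟫ = L⁻¹ * ⟪l₁, d⟫ := by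
    rw [hwx, inner_smul_right]
  have hnw : L / 2 * ‖w - x₁‖ ^ 2 = 1 / (2 * L) * ‖d‖ ^ 2 := by
    rw [hwx, norm_smul, Real.norm_eq_abs, abs_inv, abs_of_pos hL]
    field_simp
  have hdx : ⟪d, x₁⟫ = ⟪A x₁, y₂ - y₁⟫ := by
    rw [hdd, ← hadj, real_inner_comm]
  have hdn : lam * ‖y₂ - y₁‖ ^ 2 ≤ ‖d‖ ^ 2 := hmin _ hmem
  have h2L : (0:ℝ) < 2 * L := by linarith
  have hfrac : lam / (2 * L) * ‖y₂ - y₁‖ ^ 2 ≤ 1 / (2 * L) * ‖d‖ ^ 2 := by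
    rw [div_mul_eq_mul_div, div_mul_eq_mul_div, one_mul]
    exact div_le_div_of_nonneg_right hdn h2L.le |>.trans_eq rfl
  -- assemble
  have key : ψ y₁ + ⟪A x₁, y₂ - y₁⟫ + 1 / (2 * L) * ‖d‖ ^ 2 ≤ ψ y₂ := by
    have := hψ2
    rw [hy2w] at this
    rw [hlw, hnw] at hdesc
    rw [← hdx]
    have hid : L⁻¹ * ‖d‖ ^ 2 - 1 / (2 * L) * ‖d‖ ^ 2 = 1 / (2 * L) * ‖d‖ ^ 2 := by
      field_simp
      ring
    linarith [hψ1]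
  calc ψ y₁ + ⟪A x₁, y₂ - y₁⟫ + lam / (2 * L) * ‖y₂ - y₁‖ ^ 2
      ≤ ψ y₁ + ⟪A x₁, y₂ - y₁⟫ + 1 / (2 * L) * ‖d‖ ^ 2 := by linarith
    _ ≤ ψ y₂ := key
end
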